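/- Let d and d' be real numbers with d > 0, d' ≥ 0 and d + d' < 1, and let X and g be analytic functions on D_{1−d'} with finite weighted Fourier norms ‖X‖_{1−d'} and ‖g‖_{1−d'}. Then for every integer j ≥ 1 one has (1/j!) ‖L_X^j g‖_{1−d−d'} ≤ (1/e²) (2e/(ρσ))^j d^{−2j} ‖X‖_{1−d'}^j ‖g‖_{1−d'}, where L_X g = {g, X} is the Lie derivative and L_X^j its j-th iterate. -/

import Mathlib

/-!
Each bracket with `X` costs one Cauchy estimate in the actions (`‖∂_p f‖ ≤ ‖f‖ / δ` on a
domain shrunk by `δ`) and one factor `|k|` in the angles, absorbed by the weight through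
`|k| e^{-|k| t} ≤ 1 / (e t)` on a strip shrunk by `t`. On coefficients the bracket is a
convolution, and the weight `e^{|k| σ}` is submultiplicative, so the weighted norm is
submultiplicative. Splitting the loss `d` into `j` equal steps, the `i`-th bracket costs
`2 j² / (e ρ σ d² i)`, hence `‖L_X^j g‖ ≤ (2 j² / (e ρ σ d²))^j / j! ‖X‖^j ‖g‖`, and
`j^j / j! ≤ e^{j-1}` gives the stated constant. The iterates stay holomorphic because the
coefficient series of a bracket converges locally uniformly with all its derivatives.
-/

open scoped BigOperators ENNReal
open Real

namespace KAMStmt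

variable {n : ℕ}

/-- ℓ¹ norm of an integer vector `k`. -/
def znorm (k : Fin n → ℤ) : ℕ := ∑ j, (k j).natAbs

/-- Complex polydisc of radius `ρ` around a center `c`. -/
def polydisc (ρ : ℝ) (c : Fin n → ℂ) : Set (Fin n → ℂ) :=
  {z | ∀ j, ‖z j - c j‖ < ρ}

/-- Complex extension `G_ρ` of a real set `G ⊆ ℝⁿ`. -/
def Gext (G : Set (Fin n → ℝ)) (ρ : ℝ) : Set (Fin n → ℂ) :=
  ⋃ p ∈ G, polydisc ρ (fun j => (p j : ℂ))

/-- Complex extension `Tⁿ_σ` of the torus. -/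
def torusExt (n : ℕ) (σ : ℝ) : Set (Fin n → ℂ) :=
  {q | ∀ j, |(q j).im| < σ}

/-- `k·q` with `k ∈ ℤⁿ`, `q ∈ ℂⁿ`. -/
noncomputable def zdotC (k : Fin n → ℤ) (q : Fin n → ℂ) : ℂ := ∑ j, (k j : ℂ) * q j

/-- `k·ω` with `k ∈ ℤⁿ`, `ω ∈ ℝⁿ`. -/
def zdotR (k : Fin n → ℤ) (ω : Fin n → ℝ) : ℝ := ∑ j, (k j : ℝ) * ω j

/-- Diophantine condition `|k·ω| > γ |k|^{-τ}` for all `k ≠ 0`. -/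
def Diophantine (ω : Fin n → ℝ) (γ τ : ℝ) : Prop :=
  ∀ k : Fin n → ℤ, k ≠ 0 → γ * (znorm k : ℝ) ^ (-τ) < |zdotR k ω|

/-- Families of Fourier coefficients `f_k(p)` of a function `f(p,q) = Σ_k f_k(p) e^{i k·q}`. -/
abbrev Coeffs (n : ℕ) := (Fin n → ℤ) → (Fin n → ℂ) → ℂ

/-- sup of `‖g‖` over a set, in `ℝ≥0∞`. -/
noncomputable def supE (S : Set (Fin n → ℂ)) (g : (Fin n → ℂ) → ℂ) : ℝ≥0∞ :=
  ⨆ p ∈ S, (‖g p‖₊ : ℝ≥0∞)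

/-- weighted Fourier norm `‖f‖_{ρ,σ} = Σ_k |f_k|_ρ e^{|k|σ}` (sup over `G_ρ`). -/
noncomputable def wnorm (G : Set (Fin n → ℝ)) (F : Coeffs n) (ρ σ : ℝ) : ℝ≥0∞ :=
  ∑' k : Fin n → ℤ, supE (Gext G ρ) (F k) * ENNReal.ofReal (Real.exp ((znorm k : ℝ) * σ))

/-- partial derivative `∂g/∂p_j`. -/
noncomputable def pder (j : Fin n) (g : (Fin n → ℂ) → ℂ) : (Fin n → ℂ) → ℂ :=
  fun p => fderiv ℂ g p (Pi.single j 1)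

/-- Fourier coefficients of the Poisson bracket
`{f,g} = Σ_j (∂f/∂p_j ∂g/∂q_j − ∂f/∂q_j ∂g/∂p_j)`. -/
noncomputable def pbC (F Gc : Coeffs n) : Coeffs n := fun k p =>
  ∑' k₁ : Fin n → ℤ, ∑ j,
    (pder j (F k₁) p * (Complex.I * ((k j - k₁ j : ℤ) : ℂ)) * Gc (k - k₁) p
      - Complex.I * ((k₁ j : ℤ) : ℂ) * F k₁ p * pder j (Gc (k - k₁)) p)

/-- Lie derivative `L_X g = {g, X}` at the level of Fourier coefficients. -/
noncomputable def lieC (X g : Coeffs n) : Coeffs n := pbC g X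

/-- iterated Lie derivative `L_X^s`. -/
noncomputable def lieIter (X : Coeffs n) (s : ℕ) (g : Coeffs n) : Coeffs n := (lieC X)^[s] g

/-- the class `P_l`: homogeneous of degree `l` in the actions `p`. -/
def InP (l : ℕ) (F : Coeffs n) : Prop :=
  ∀ (k : Fin n → ℤ) (t : ℂ) (p : Fin n → ℂ), F k (t • p) = t ^ l * F k p

/-- standard symplectic form on `ℂⁿ × ℂⁿ`. -/
noncomputable def sympForm (u v : (Fin n → ℂ) × (Fin n → ℂ)) : ℂ :=
  ∑ j, (u.1 j * v.2 j - u.2 j * v.1 j)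

/-- canonical (holomorphic symplectic) map on a domain `D`. -/
def IsCanonicalOn (D : Set ((Fin n → ℂ) × (Fin n → ℂ)))
    (C : (Fin n → ℂ) × (Fin n → ℂ) → (Fin n → ℂ) × (Fin n → ℂ)) : Prop :=
  DifferentiableOn ℂ C D ∧
  ∀ z ∈ D, ∀ u v, sympForm (fderiv ℂ C z u) (fderiv ℂ C z v) = sympForm u v

open Metric Topology
open scoped ContDiff

lemma isOpen_polydisc (r : ℝ) (c : Fin n → ℂ) : IsOpen (polydisc r c) := by
  simp only [polydisc, Set.ofPred_forall]
  exact isOpen_iInter_of_finite fun j => isOpen_lt (by fun_prop) continuous_const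

lemma isOpen_Gext (G : Set (Fin n → ℝ)) (r : ℝ) : IsOpen (Gext G r) :=
  isOpen_biUnion fun _ _ => isOpen_polydisc _ _

lemma Gext_mono (G : Set (Fin n → ℝ)) {r r' : ℝ} (h : r ≤ r') : Gext G r ⊆ Gext G r' :=
  Set.iUnion₂_mono fun _ _ _ hz j => (hz j).trans_le h

lemma ball_subset_Gext {G : Set (Fin n → ℝ)} {r r' : ℝ} {z : Fin n → ℂ} (hz : z ∈ Gext G r') :
    ball z (r - r') ⊆ Gext G r := by
  obtain ⟨p, hp, hzp⟩ := Set.mem_iUnion₂.1 hz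
  refine fun w hw => Set.mem_biUnion hp fun j => ?_
  have hwj : ‖w j - z j‖ < r - r' := (norm_le_pi_norm (w - z) j).trans_lt (mem_ball_iff_norm.1 hw)
  calc ‖w j - (p j : ℂ)‖ ≤ ‖w j - z j‖ + ‖z j - p j‖ := norm_sub_le_norm_sub_add_norm_sub _ _ _
    _ < (r - r') + r' := add_lt_add hwj (hzp j)
    _ = r := by ring

lemma le_div_of_forall_lt_le_div {a C R : ℝ} (hR : 0 < R)
    (h : ∀ r, 0 < r → r < R → a ≤ C / r) : a ≤ C / R := by
  have hlim : Filter.Tendsto (fun r => C / r) (𝓝[<] R) (𝓝 (C / R)) :=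
    ((continuousAt_const.div continuousAt_id hR.ne').tendsto).mono_left nhdsWithin_le_nhds
  refine ge_of_tendsto hlim ?_
  filter_upwards [Ioo_mem_nhdsLT (half_lt_self hR)] with r hr
  exact h r ((half_pos hR).trans hr.1) hr.2

section Cauchy

variable {V E : Type*} [NormedAddCommGroup V] [NormedSpace ℂ V]
  [NormedAddCommGroup E] [NormedSpace ℂ E]

theorem norm_fderiv_le_of_forall_mem_ball_norm_le {f : V → E} {z : V} {R C : ℝ} (hR : 0 < R)
    (hf : DifferentiableOn ℂ f (ball z R)) (hC : ∀ w ∈ ball z R, ‖f w‖ ≤ C) :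
    ‖fderiv ℂ f z‖ ≤ C / R := by
  have hC0 : 0 ≤ C := (norm_nonneg _).trans (hC z (mem_ball_self hR))
  refine ContinuousLinearMap.opNorm_le_bound _ (by positivity) fun v => ?_
  rcases eq_or_ne v 0 with rfl | hv
  · simp
  have hv' : 0 < ‖v‖ := norm_pos_iff.2 hv
  -- restrict `f` to the complex line `t ↦ z + t • v` and apply the one-variable Cauchy estimate
  have hline : ∀ t : ℂ, ‖t‖ < R / ‖v‖ → z + t • v ∈ ball z R := fun t ht => by
    rw [mem_ball_iff_norm, add_sub_cancel_left, norm_smul]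
    exact (lt_div_iff₀ hv').1 ht
  have hdiff : ∀ t : ℂ, ‖t‖ < R / ‖v‖ → DifferentiableAt ℂ (fun s : ℂ => f (z + s • v)) t :=
    fun t ht => ((hf.differentiableAt (isOpen_ball.mem_nhds (hline t ht))).comp t
      (by fun_prop))
  have hderiv : deriv (fun s : ℂ => f (z + s • v)) 0 = fderiv ℂ f z v := by
    have hfz := (hf.differentiableAt (isOpen_ball.mem_nhds (mem_ball_self hR))).hasFDerivAt
    have hl : HasDerivAt (fun s : ℂ => z + s • v) v 0 := by
      simpa using ((hasDerivAt_id (0 : ℂ)).smul_const v).const_add z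
    exact (hfz.comp_hasDerivAt_of_eq 0 hl (by simp)).deriv
  suffices ‖fderiv ℂ f z v‖ ≤ C / (R / ‖v‖) by rwa [div_div_eq_mul_div, mul_div_right_comm] at this
  refine le_div_of_forall_lt_le_div (by positivity) fun r hr hrR => ?_
  rw [← hderiv]
  refine Complex.norm_deriv_le_of_forall_mem_sphere_norm_le hr ⟨fun t ht => ?_, fun t ht => ?_⟩
    fun t ht => hC _ (hline t ?_)
  · exact (hdiff t ((mem_ball_zero_iff.1 ht).trans hrR)).differentiableWithinAt
  · rw [closure_ball _ hr.ne', mem_closedBall_zero_iff] at ht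
    exact (hdiff t (ht.trans_lt hrR)).continuousAt.continuousWithinAt
  · rw [mem_sphere_zero_iff_norm] at ht
    exact ht.trans_lt hrR

end Cauchy

theorem norm_fderiv_le_of_mem_Gext {E : Type*} [NormedAddCommGroup E] [NormedSpace ℂ E]
    {G : Set (Fin n → ℝ)} {r r' C : ℝ} (hr : r' < r) {f : (Fin n → ℂ) → E}
    (hf : DifferentiableOn ℂ f (Gext G r)) (hC : ∀ w ∈ Gext G r, ‖f w‖ ≤ C)
    {z : Fin n → ℂ} (hz : z ∈ Gext G r') : ‖fderiv ℂ f z‖ ≤ C / (r - r') :=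
  norm_fderiv_le_of_forall_mem_ball_norm_le (sub_pos.2 hr) (hf.mono (ball_subset_Gext hz))
    fun w hw => hC w (ball_subset_Gext hz hw)

section Series

variable {ι : Type*} {G : Set (Fin n → ℝ)}

theorem hasFDerivAt_tsum_of_Gext {E : Type*} [NormedAddCommGroup E] [NormedSpace ℂ E]
    [CompleteSpace E] {t : ι → (Fin n → ℂ) → E} {b : ι → ℝ} {r r' : ℝ} (hr : r' < r)
    (ht : ∀ i, DifferentiableOn ℂ (t i) (Gext G r)) (hb : Summable b)
    (hbd : ∀ i, ∀ z ∈ Gext G r, ‖t i z‖ ≤ b i) {z : Fin n → ℂ} (hz : z ∈ Gext G r') :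
    HasFDerivAt (fun w => ∑' i, t i w) (∑' i, fderiv ℂ (t i) z) z := by
  have hsub : Gext G r' ⊆ Gext G r := Gext_mono G hr.le
  refine hasFDerivAt_of_tendstoUniformlyOn (isOpen_Gext G r')
    (tendstoUniformlyOn_tsum (hb.div_const (r - r'))
      fun i w hw => norm_fderiv_le_of_mem_Gext hr (ht i) (hbd i) hw)
    (fun s w hw => HasFDerivAt.sum fun i _ =>
      ((ht i).differentiableAt ((isOpen_Gext G r).mem_nhds (hsub hw))).hasFDerivAt)
    (fun w hw => by
      simp only [Finset.sum_apply]
      exact (hb.of_norm_bounded fun i => hbd i w (hsub hw)).hasSum)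
    hz

theorem contDiffOn_nat_tsum_of_Gext (m : ℕ) {E : Type*} [NormedAddCommGroup E]
    [NormedSpace ℂ E] [CompleteSpace E] {t : ι → (Fin n → ℂ) → E} {b : ι → ℝ} {r r' : ℝ}
    (hr : r' < r) (ht : ∀ i, ContDiffOn ℂ ∞ (t i) (Gext G r)) (hb : Summable b)
    (hbd : ∀ i, ∀ z ∈ Gext G r, ‖t i z‖ ≤ b i) :
    ContDiffOn ℂ m (fun w => ∑' i, t i w) (Gext G r') := by
  induction m generalizing E b r with
  | zero =>
    refine contDiffOn_zero.2 <| (tendstoUniformlyOn_tsum hb fun i w hw =>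
      hbd i w (Gext_mono G hr.le hw)).continuousOn <| Filter.Frequently.of_forall fun s => ?_
    exact continuousOn_finsetSum _ fun i _ => ((ht i).continuousOn).mono (Gext_mono G hr.le)
  | succ m ih =>
    have hdiff : ∀ i, DifferentiableOn ℂ (t i) (Gext G r) :=
      fun i => (ht i).differentiableOn (by simp)
    -- term-by-term differentiation; the Cauchy estimate for the derivatives costs part of the gap
    obtain ⟨r'', hr', hr''⟩ := exists_between hr
    rw [Nat.cast_succ, contDiffOn_succ_iff_fderiv_of_isOpen (isOpen_Gext G r')]
    refine ⟨fun z hz => (hasFDerivAt_tsum_of_Gext hr hdiff hb hbd hz).differentiableAt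
      |>.differentiableWithinAt, by simp, ?_⟩
    refine (ih hr' (fun i => ((ht i).fderiv_of_isOpen (isOpen_Gext G r) (by simp)).mono
      (Gext_mono G hr''.le)) (hb.div_const (r - r''))
      fun i z hz => norm_fderiv_le_of_mem_Gext hr'' (hdiff i) (hbd i) hz).congr fun z hz => ?_
    exact (hasFDerivAt_tsum_of_Gext hr hdiff hb hbd hz).fderiv

theorem contDiffOn_tsum_of_Gext {E : Type*} [NormedAddCommGroup E] [NormedSpace ℂ E]
    [CompleteSpace E] {t : ι → (Fin n → ℂ) → E} {b : ι → ℝ} {r r' : ℝ} (hr : r' < r)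
    (ht : ∀ i, ContDiffOn ℂ ∞ (t i) (Gext G r)) (hb : Summable b)
    (hbd : ∀ i, ∀ z ∈ Gext G r, ‖t i z‖ ≤ b i) :
    ContDiffOn ℂ ∞ (fun w => ∑' i, t i w) (Gext G r') :=
  contDiffOn_infty.2 fun m => contDiffOn_nat_tsum_of_Gext m hr ht hb hbd

end Series

section Weights

lemma enorm_le_supE {S : Set (Fin n → ℂ)} (f : (Fin n → ℂ) → ℂ) {p : Fin n → ℂ} (hp : p ∈ S) :
    ‖f p‖ₑ ≤ supE S f :=
  le_iSup₂ (f := fun q (_ : q ∈ S) => (‖f q‖₊ : ℝ≥0∞)) p hp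

lemma supE_le {S : Set (Fin n → ℂ)} {f : (Fin n → ℂ) → ℂ} {C : ℝ≥0∞}
    (h : ∀ p ∈ S, ‖f p‖ₑ ≤ C) : supE S f ≤ C :=
  iSup₂_le h


noncomputable def expWeight (k : Fin n → ℤ) (s : ℝ) : ℝ≥0∞ :=
  ENNReal.ofReal (Real.exp (znorm k * s))

lemma wnorm_eq_tsum (G : Set (Fin n → ℝ)) (F : Coeffs n) (r s : ℝ) :
    wnorm G F r s = ∑' k, supE (Gext G r) (F k) * expWeight k s := rfl

lemma expWeight_zero_right (k : Fin n → ℤ) : expWeight k 0 = 1 := by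
  simp [expWeight]

lemma expWeight_mono (k : Fin n → ℤ) {s s' : ℝ} (h : s ≤ s') : expWeight k s ≤ expWeight k s' :=
  ENNReal.ofReal_le_ofReal (Real.exp_le_exp.2 (by gcongr))

lemma znorm_add_le (k₁ k₂ : Fin n → ℤ) : znorm (k₁ + k₂) ≤ znorm k₁ + znorm k₂ := by
  simp only [znorm, ← Finset.sum_add_distrib]
  exact Finset.sum_le_sum fun j _ => Int.natAbs_add_le (k₁ j) (k₂ j)

lemma expWeight_add_le (k₁ k₂ : Fin n → ℤ) {s : ℝ} (hs : 0 ≤ s) :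
    expWeight (k₁ + k₂) s ≤ expWeight k₁ s * expWeight k₂ s := by
  rw [expWeight, expWeight, expWeight, ← ENNReal.ofReal_mul (Real.exp_nonneg _), ← Real.exp_add,
    ← add_mul]
  gcongr
  exact_mod_cast znorm_add_le k₁ k₂

lemma znorm_mul_expWeight_le (k : Fin n → ℤ) (s : ℝ) {t : ℝ} (ht : 0 < t) :
    znorm k * expWeight k s ≤ ENNReal.ofReal (1 / (Real.exp 1 * t)) * expWeight k (s + t) := by
  rw [expWeight, expWeight, ← ENNReal.ofReal_natCast, ← ENNReal.ofReal_mul (by positivity),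
    ← ENNReal.ofReal_mul (by positivity)]
  refine ENNReal.ofReal_le_ofReal ?_
  have hx : (znorm k : ℝ) * t ≤ Real.exp ((znorm k : ℝ) * t - 1) := by
    linarith [Real.add_one_le_exp ((znorm k : ℝ) * t - 1)]
  rw [Real.exp_sub] at hx
  calc (znorm k : ℝ) * Real.exp (znorm k * s)
      = (znorm k * t) / (Real.exp 1 * t) * Real.exp 1 * Real.exp (znorm k * s) := by
        field_simp
    _ ≤ Real.exp (znorm k * t) / Real.exp 1 / (Real.exp 1 * t) * Real.exp 1
          * Real.exp (znorm k * s) := by gcongr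
    _ = 1 / (Real.exp 1 * t) * Real.exp (znorm k * (s + t)) := by
        rw [mul_add, Real.exp_add]; field_simp

theorem tsum_convolution_mul_le {ι : Type*} [AddCommGroup ι] (f g w : ι → ℝ≥0∞)
    (hw : ∀ k₁ k₂, w (k₁ + k₂) ≤ w k₁ * w k₂) :
    ∑' k, (∑' k₁, f k₁ * g (k - k₁)) * w k ≤ (∑' k, f k * w k) * ∑' k, g k * w k := by
  calc ∑' k, (∑' k₁, f k₁ * g (k - k₁)) * w k
      = ∑' k₁, ∑' k₂, f k₁ * g k₂ * w (k₁ + k₂) := by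
        simp_rw [← ENNReal.tsum_mul_right]
        rw [ENNReal.tsum_comm]
        refine tsum_congr fun k₁ => ?_
        rw [← (Equiv.addLeft k₁).tsum_eq]
        simp
    _ ≤ ∑' k₁, ∑' k₂, f k₁ * w k₁ * (g k₂ * w k₂) :=
        ENNReal.tsum_le_tsum fun k₁ => ENNReal.tsum_le_tsum fun k₂ =>
          (mul_le_mul' le_rfl (hw k₁ k₂)).trans_eq (by ring)
    _ = (∑' k, f k * w k) * ∑' k, g k * w k := by
        simp_rw [ENNReal.tsum_mul_left, ENNReal.tsum_mul_right]

lemma tsum_znorm_mul_le_wnorm (G : Set (Fin n → ℝ)) (F : Coeffs n) (r : ℝ) {s s' : ℝ}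
    (hs : s < s') :
    ∑' k, znorm k * supE (Gext G r) (F k) * expWeight k s ≤
      ENNReal.ofReal (1 / (Real.exp 1 * (s' - s))) * wnorm G F r s' := by
  rw [wnorm_eq_tsum, ← ENNReal.tsum_mul_left]
  refine ENNReal.tsum_le_tsum fun k => ?_
  calc (znorm k : ℝ≥0∞) * supE (Gext G r) (F k) * expWeight k s
      = supE (Gext G r) (F k) * (znorm k * expWeight k s) := by ring
    _ ≤ supE (Gext G r) (F k) *
          (ENNReal.ofReal (1 / (Real.exp 1 * (s' - s))) * expWeight k (s + (s' - s))) :=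
        mul_le_mul' le_rfl (znorm_mul_expWeight_le k s (sub_pos.2 hs))
    _ = _ := by rw [add_sub_cancel]; ring

lemma wnorm_mono (G : Set (Fin n → ℝ)) (F : Coeffs n) {r r' s s' : ℝ} (hr : r ≤ r')
    (hs : s ≤ s') : wnorm G F r s ≤ wnorm G F r' s' :=
  ENNReal.tsum_le_tsum fun k =>
    mul_le_mul' (supE_le fun _ hp => enorm_le_supE _ (Gext_mono G hr hp)) (expWeight_mono k hs)

end Weights

section Bracket

variable {G : Set (Fin n → ℝ)}

lemma enorm_pder_le {r r' : ℝ} (hr : r' < r) {f : (Fin n → ℂ) → ℂ}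
    (hf : DifferentiableOn ℂ f (Gext G r)) (j : Fin n) {z : Fin n → ℂ} (hz : z ∈ Gext G r') :
    ‖pder j f z‖ₑ ≤ ENNReal.ofReal (1 / (r - r')) * supE (Gext G r) f := by
  rcases eq_or_ne (supE (Gext G r) f) ⊤ with htop | htop
  · rw [htop, ENNReal.mul_top (by simpa using hr)]
    exact le_top
  have hC : ∀ w ∈ Gext G r, ‖f w‖ ≤ (supE (Gext G r) f).toReal := fun w hw => by
    simpa using ENNReal.toReal_mono htop (enorm_le_supE f hw)
  have hpder : ‖pder j f z‖ ≤ ‖fderiv ℂ f z‖ := by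
    simpa [pder, Pi.norm_single] using (fderiv ℂ f z).le_opNorm (Pi.single j 1)
  rw [← ofReal_norm, ← ENNReal.ofReal_toReal htop, ← ENNReal.ofReal_mul (by simpa using hr.le)]
  refine ENNReal.ofReal_le_ofReal (hpder.trans ?_)
  simpa [div_eq_inv_mul] using norm_fderiv_le_of_mem_Gext hr hf hC hz

noncomputable def pbCTerm (F X : Coeffs n) (k k₁ : Fin n → ℤ) (p : Fin n → ℂ) : ℂ :=
  ∑ j, (pder j (F k₁) p * (Complex.I * ((k j - k₁ j : ℤ) : ℂ)) * X (k - k₁) p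
    - Complex.I * ((k₁ j : ℤ) : ℂ) * F k₁ p * pder j (X (k - k₁)) p)

lemma pbC_eq_tsum (F X : Coeffs n) (k : Fin n → ℤ) :
    pbC F X k = fun p => ∑' k₁, pbCTerm F X k k₁ p := rfl

noncomputable def pbMajorant (G : Set (Fin n → ℝ)) (F X : Coeffs n) (r rF rX : ℝ)
    (k k₁ : Fin n → ℤ) : ℝ≥0∞ :=
  ENNReal.ofReal (1 / (rF - r)) *
      (supE (Gext G rF) (F k₁) * (znorm (k - k₁) * supE (Gext G rX) (X (k - k₁))))
    + ENNReal.ofReal (1 / (rX - r)) *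
      (znorm k₁ * supE (Gext G rF) (F k₁) * supE (Gext G rX) (X (k - k₁)))

lemma enorm_I_mul_intCast (m : ℤ) : ‖Complex.I * (m : ℂ)‖ₑ = m.natAbs := by
  rw [← ofReal_norm, ← ENNReal.ofReal_natCast, norm_mul, Complex.norm_I, one_mul,
    Complex.norm_intCast, Nat.cast_natAbs, Int.cast_abs]

lemma enorm_pbCTerm_le {r rF rX : ℝ} (hrF : r < rF) (hrX : r < rX) {F X : Coeffs n}
    (hF : ∀ k, DifferentiableOn ℂ (F k) (Gext G rF))
    (hX : ∀ k, DifferentiableOn ℂ (X k) (Gext G rX)) (k k₁ : Fin n → ℤ) {z : Fin n → ℂ}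
    (hz : z ∈ Gext G r) :
    ‖pbCTerm F X k k₁ z‖ₑ ≤ pbMajorant G F X r rF rX k k₁ := by
  set a := supE (Gext G rF) (F k₁)
  set x := supE (Gext G rX) (X (k - k₁))
  have hFz : ‖F k₁ z‖ₑ ≤ a := enorm_le_supE _ (Gext_mono G hrF.le hz)
  have hXz : ‖X (k - k₁) z‖ₑ ≤ x := enorm_le_supE _ (Gext_mono G hrX.le hz)
  have hterm : ∀ j, ‖pder j (F k₁) z * (Complex.I * ((k j - k₁ j : ℤ) : ℂ)) * X (k - k₁) z
      - Complex.I * ((k₁ j : ℤ) : ℂ) * F k₁ z * pder j (X (k - k₁)) z‖ₑ ≤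
      ENNReal.ofReal (1 / (rF - r)) * (a * ((k - k₁) j).natAbs * x)
        + ENNReal.ofReal (1 / (rX - r)) * ((k₁ j).natAbs * a * x) := fun j => by
    refine enorm_sub_le.trans (add_le_add ?_ ?_)
    · rw [enorm_mul, enorm_mul, enorm_I_mul_intCast, Pi.sub_apply]
      calc ‖pder j (F k₁) z‖ₑ * ((k j - k₁ j).natAbs : ℝ≥0∞) * ‖X (k - k₁) z‖ₑ
          ≤ ENNReal.ofReal (1 / (rF - r)) * a * ((k j - k₁ j).natAbs : ℝ≥0∞) * x := by
            gcongr; exact enorm_pder_le hrF (hF k₁) j hz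
        _ = _ := by ring
    · rw [enorm_mul, enorm_mul, enorm_I_mul_intCast]
      calc ((k₁ j).natAbs : ℝ≥0∞) * ‖F k₁ z‖ₑ * ‖pder j (X (k - k₁)) z‖ₑ
          ≤ ((k₁ j).natAbs : ℝ≥0∞) * a * (ENNReal.ofReal (1 / (rX - r)) * x) := by
            gcongr; exact enorm_pder_le hrX (hX (k - k₁)) j hz
        _ = _ := by ring
  refine (enorm_sum_le _ _).trans ((Finset.sum_le_sum fun j _ => hterm j).trans_eq ?_)
  simp only [pbMajorant, znorm, Nat.cast_sum, Finset.sum_add_distrib, ← Finset.mul_sum,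
    ← Finset.sum_mul]
  ring

end Bracket

section OneStep

variable {G : Set (Fin n → ℝ)} {F X : Coeffs n} {r rF rX s sF sX : ℝ}

theorem tsum_pbMajorant_mul_expWeight_le (hrF : r < rF) (hrX : r < rX) (hs : 0 ≤ s)
    (hsF : s < sF) (hsX : s < sX) :
    ∑' k, (∑' k₁, pbMajorant G F X r rF rX k k₁) * expWeight k s ≤
      ENNReal.ofReal (1 / ((rF - r) * (Real.exp 1 * (sX - s)))
          + 1 / ((rX - r) * (Real.exp 1 * (sF - s))))
        * wnorm G F rF sF * wnorm G X rX sX := by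
  set a := fun k => supE (Gext G rF) (F k)
  set x := fun k => supE (Gext G rX) (X k)
  set κ₁ := ENNReal.ofReal (1 / (rF - r))
  set κ₂ := ENNReal.ofReal (1 / (rX - r))
  set w := fun k => expWeight k s
  have hw : ∀ k₁ k₂, w (k₁ + k₂) ≤ w k₁ * w k₂ := fun k₁ k₂ => expWeight_add_le k₁ k₂ hs
  have hsplit : ∀ k, ∑' k₁, pbMajorant G F X r rF rX k k₁ =
      κ₁ * ∑' k₁, a k₁ * (fun k => znorm k * x k) (k - k₁)
        + κ₂ * ∑' k₁, (fun k => znorm k * a k) k₁ * x (k - k₁) := fun k => by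
    simp only [pbMajorant, ENNReal.tsum_add, ENNReal.tsum_mul_left]
    rfl
  calc ∑' k, (∑' k₁, pbMajorant G F X r rF rX k k₁) * expWeight k s
      = κ₁ * ∑' k, (∑' k₁, a k₁ * (fun k => znorm k * x k) (k - k₁)) * w k
        + κ₂ * ∑' k, (∑' k₁, (fun k => znorm k * a k) k₁ * x (k - k₁)) * w k := by
        simp only [hsplit, add_mul, ENNReal.tsum_add, mul_assoc, ENNReal.tsum_mul_left]
        rfl
    _ ≤ κ₁ * ((∑' k, a k * w k) * ∑' k, znorm k * x k * w k)
        + κ₂ * ((∑' k, znorm k * a k * w k) * ∑' k, x k * w k) := by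
        gcongr
        · exact tsum_convolution_mul_le _ _ w hw
        · exact tsum_convolution_mul_le _ _ w hw
    _ ≤ κ₁ * (wnorm G F rF sF *
            (ENNReal.ofReal (1 / (Real.exp 1 * (sX - s))) * wnorm G X rX sX))
        + κ₂ * (ENNReal.ofReal (1 / (Real.exp 1 * (sF - s))) * wnorm G F rF sF
            * wnorm G X rX sX) := by
        gcongr
        · exact wnorm_mono G F le_rfl hsF.le
        · exact tsum_znorm_mul_le_wnorm G X rX hsX
        · exact tsum_znorm_mul_le_wnorm G F rF hsF
        · exact wnorm_mono G X le_rfl hsX.le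
    _ = _ := by
        have hF0 : 0 < rF - r := sub_pos.2 hrF
        have hX0 : 0 < rX - r := sub_pos.2 hrX
        have h₁ : ENNReal.ofReal (1 / ((rF - r) * (Real.exp 1 * (sX - s)))) =
            κ₁ * ENNReal.ofReal (1 / (Real.exp 1 * (sX - s))) := by
          rw [← ENNReal.ofReal_mul (by positivity), one_div_mul_one_div]
        have h₂ : ENNReal.ofReal (1 / ((rX - r) * (Real.exp 1 * (sF - s)))) =
            κ₂ * ENNReal.ofReal (1 / (Real.exp 1 * (sF - s))) := by
          rw [← ENNReal.ofReal_mul (by positivity), one_div_mul_one_div]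
        rw [ENNReal.ofReal_add (by positivity) (by positivity), h₁, h₂]
        ring

theorem wnorm_pbC_le (hrF : r < rF) (hrX : r < rX) (hs : 0 ≤ s) (hsF : s < sF) (hsX : s < sX)
    (hF : ∀ k, DifferentiableOn ℂ (F k) (Gext G rF))
    (hX : ∀ k, DifferentiableOn ℂ (X k) (Gext G rX)) :
    wnorm G (pbC F X) r s ≤
      ENNReal.ofReal (1 / ((rF - r) * (Real.exp 1 * (sX - s)))
          + 1 / ((rX - r) * (Real.exp 1 * (sF - s))))
        * wnorm G F rF sF * wnorm G X rX sX := by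
  refine le_trans (ENNReal.tsum_le_tsum fun k => mul_le_mul' ?_ le_rfl)
    (tsum_pbMajorant_mul_expWeight_le hrF hrX hs hsF hsX)
  exact supE_le fun z hz => enorm_tsum_le_tsum_enorm.trans
    (ENNReal.tsum_le_tsum fun k₁ => enorm_pbCTerm_le hrF hrX hF hX k k₁ hz)

lemma tsum_pbMajorant_ne_top (hrF : r < rF) (hrX : r < rX) (hsF : 0 < sF) (hsX : 0 < sX)
    (hWF : wnorm G F rF sF ≠ ⊤) (hWX : wnorm G X rX sX ≠ ⊤) (k : Fin n → ℤ) :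
    ∑' k₁, pbMajorant G F X r rF rX k k₁ ≠ ⊤ := by
  refine ne_top_of_le_ne_top ?_ (le_trans ?_ (tsum_pbMajorant_mul_expWeight_le (F := F) (X := X)
    (G := G) hrF hrX le_rfl hsF hsX))
  · exact ENNReal.mul_ne_top (ENNReal.mul_ne_top ENNReal.ofReal_ne_top hWF) hWX
  · simpa only [expWeight_zero_right, mul_one] using
      ENNReal.le_tsum (f := fun k => (∑' k₁, pbMajorant G F X r rF rX k k₁) * expWeight k 0) k

lemma contDiffOn_pder {U : Set (Fin n → ℂ)} (hU : IsOpen U) {f : (Fin n → ℂ) → ℂ}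
    (hf : ContDiffOn ℂ ∞ f U) (j : Fin n) : ContDiffOn ℂ ∞ (pder j f) U :=
  (hf.fderiv_of_isOpen hU (by simp)).clm_apply contDiffOn_const

lemma pbCTerm_contDiffOn (hrF : r ≤ rF) (hrX : r ≤ rX)
    (hF : ∀ k, ContDiffOn ℂ ∞ (F k) (Gext G rF)) (hX : ∀ k, ContDiffOn ℂ ∞ (X k) (Gext G rX))
    (k k₁ : Fin n → ℤ) : ContDiffOn ℂ ∞ (pbCTerm F X k k₁) (Gext G r) := by
  have hF' := fun k => (hF k).mono (Gext_mono G hrF)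
  have hX' := fun k => (hX k).mono (Gext_mono G hrX)
  have hpF := fun k j => (contDiffOn_pder (isOpen_Gext G rF) (hF k) j).mono (Gext_mono G hrF)
  have hpX := fun k j => (contDiffOn_pder (isOpen_Gext G rX) (hX k) j).mono (Gext_mono G hrX)
  unfold pbCTerm
  fun_prop

theorem pbC_contDiffOn (hrF : r < rF) (hrX : r < rX) (hsF : 0 < sF) (hsX : 0 < sX)
    (hF : ∀ k, ContDiffOn ℂ ∞ (F k) (Gext G rF)) (hX : ∀ k, ContDiffOn ℂ ∞ (X k) (Gext G rX))
    (hWF : wnorm G F rF sF ≠ ⊤) (hWX : wnorm G X rX sX ≠ ⊤) (k : Fin n → ℤ) :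
    ContDiffOn ℂ ∞ (pbC F X k) (Gext G r) := by
  obtain ⟨r', hr', hr'F, hr'X⟩ : ∃ r', r < r' ∧ r' < rF ∧ r' < rX :=
    let ⟨r', h, h'⟩ := exists_between (lt_min hrF hrX)
    ⟨r', h, h'.trans_le (min_le_left _ _), h'.trans_le (min_le_right _ _)⟩
  have hsum := tsum_pbMajorant_ne_top hr'F hr'X hsF hsX hWF hWX k
  rw [pbC_eq_tsum]
  refine contDiffOn_tsum_of_Gext hr' (pbCTerm_contDiffOn hr'F.le hr'X.le hF hX k)
    (ENNReal.summable_toReal hsum) fun k₁ z hz => ?_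
  have hbd := ENNReal.toReal_mono (ne_top_of_le_ne_top hsum (ENNReal.le_tsum k₁))
    (enorm_pbCTerm_le hr'F hr'X (fun k => (hF k).differentiableOn (by simp))
      (fun k => (hX k).differentiableOn (by simp)) k k₁ hz)
  rwa [toReal_enorm] at hbd

end OneStep

section Iteration

open Nat

lemma lieIter_succ (X g : Coeffs n) (i : ℕ) : lieIter X (i + 1) g = pbC (lieIter X i g) X :=
  Function.iterate_succ_apply' (lieC X) i g

/-- The `(i + 1)`-st bracket loses `2 / (e δ₁ δ₂ (i + 1))`: the previous iterate is controlled on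
a domain and strip only `δ₁, δ₂` larger, but `X` on ones `(i + 1) δ₁, (i + 1) δ₂` larger. -/
theorem lieIter_contDiffOn_and_wnorm_le {G : Set (Fin n → ℝ)} {X g : Coeffs n}
    {R s δ₁ δ₂ : ℝ} (hδ₁ : 0 < δ₁) (hδ₂ : 0 < δ₂)
    (hX : ∀ k, ContDiffOn ℂ ∞ (X k) (Gext G R)) (hg : ∀ k, ContDiffOn ℂ ∞ (g k) (Gext G R))
    (hXfin : wnorm G X R s ≠ ⊤) (hgfin : wnorm G g R s ≠ ⊤) (i : ℕ) (hi : i * δ₂ ≤ s) :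
    (∀ k, ContDiffOn ℂ ∞ (lieIter X i g k) (Gext G (R - i * δ₁))) ∧
      wnorm G (lieIter X i g) (R - i * δ₁) (s - i * δ₂) ≤
        ENNReal.ofReal ((2 / (Real.exp 1 * δ₁ * δ₂)) ^ i / i !)
          * wnorm G X R s ^ i * wnorm G g R s := by
  induction i with
  | zero => simpa [lieIter] using hg
  | succ i ih =>
    push_cast at hi ⊢
    obtain ⟨hsmooth, hbound⟩ := ih (by nlinarith)
    have hfin : wnorm G (lieIter X i g) (R - i * δ₁) (s - i * δ₂) ≠ ⊤ :=
      ne_top_of_le_ne_top (by finiteness) hbound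
    rw [lieIter_succ]
    refine ⟨pbC_contDiffOn (by linarith) (by nlinarith) (by nlinarith) (by nlinarith) hsmooth hX
      hfin hXfin, ?_⟩
    set c := 2 / (Real.exp 1 * δ₁ * δ₂) with hc
    have hloss : 1 / ((R - i * δ₁ - (R - (i + 1) * δ₁)) * (Real.exp 1 * (s - (s - (i + 1) * δ₂))))
        + 1 / ((R - (R - (i + 1) * δ₁)) * (Real.exp 1 * (s - i * δ₂ - (s - (i + 1) * δ₂))))
        = c / (i + 1) := by
      rw [show R - i * δ₁ - (R - (i + 1) * δ₁) = δ₁ by ring, show s - (s - (i + 1) * δ₂) =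
        (i + 1) * δ₂ by ring, show R - (R - (i + 1) * δ₁) = (i + 1) * δ₁ by ring,
        show s - i * δ₂ - (s - (i + 1) * δ₂) = δ₂ by ring, hc]
      field_simp
      ring
    have hacc : c / (i + 1) * (c ^ i / i !) = c ^ (i + 1) / (i + 1)! := by
      rw [factorial_succ]
      push_cast
      field_simp
      ring
    calc wnorm G (pbC (lieIter X i g) X) (R - (i + 1) * δ₁) (s - (i + 1) * δ₂)
        ≤ ENNReal.ofReal (c / (i + 1))
          * wnorm G (lieIter X i g) (R - i * δ₁) (s - i * δ₂) * wnorm G X R s := by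
          refine (wnorm_pbC_le (rF := R - i * δ₁) (rX := R) (sF := s - i * δ₂) (sX := s)
            (by linarith) (by nlinarith) (by linarith) (by linarith)
            (by nlinarith) (fun k => (hsmooth k).differentiableOn (by simp))
            (fun k => (hX k).differentiableOn (by simp))).trans_eq ?_
          rw [hloss]
      _ ≤ ENNReal.ofReal (c / (i + 1))
          * (ENNReal.ofReal (c ^ i / i !) * wnorm G X R s ^ i * wnorm G g R s)
          * wnorm G X R s := by gcongr
      _ = ENNReal.ofReal (c ^ (i + 1) / (i + 1)!) * wnorm G X R s ^ (i + 1) * wnorm G g R s := by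
        rw [← hacc, ENNReal.ofReal_mul (by positivity)]
        ring

end Iteration

section Constants

open Nat

lemma pow_self_le_factorial_mul_exp {j : ℕ} (hj : 1 ≤ j) :
    (j : ℝ) ^ j ≤ j ! * Real.exp 1 ^ (j - 1) := by
  induction j, hj using Nat.le_induction with
  | base => simp
  | succ j hj ih =>
    have hj0 : (0 : ℝ) < j := by exact_mod_cast hj
    calc ((j + 1 : ℕ) : ℝ) ^ (j + 1) = (j + 1) * ((j : ℝ) ^ j * (1 + (j : ℝ)⁻¹) ^ j) := by
          rw [← mul_pow, mul_add, mul_one, mul_inv_cancel₀ hj0.ne']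
          push_cast
          ring
      _ ≤ (j + 1) * (j ! * Real.exp 1 ^ (j - 1) * Real.exp 1) := by
          gcongr
          exact Real.one_add_inv_pow_le_exp
      _ = ((j + 1)! : ℕ) * Real.exp 1 ^ (j + 1 - 1) := by
          rw [factorial_succ, Nat.add_sub_cancel, ← Nat.sub_add_cancel hj, pow_succ]
          push_cast
          ring

lemma inv_factorial_mul_pow_div_factorial_le {ρ σ d : ℝ} (hρ : 0 < ρ) (hσ : 0 < σ) (hd : 0 < d)
    {j : ℕ} (hj : 1 ≤ j) :
    1 / (j ! : ℝ) * ((2 / (Real.exp 1 * (d * ρ / j) * (d * σ / j))) ^ j / j !) ≤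
      1 / Real.exp 1 ^ 2 * (2 * Real.exp 1 / (ρ * σ)) ^ j * (1 / d ^ (2 * j)) := by
  have hfac : (0 : ℝ) < j ! := by exact_mod_cast j.factorial_pos
  have key : ((j : ℝ) ^ j / j !) ^ 2 ≤ (Real.exp 1 ^ (j - 1)) ^ 2 := by
    gcongr
    rw [div_le_iff₀ hfac, mul_comm]
    exact pow_self_le_factorial_mul_exp hj
  obtain ⟨m, rfl⟩ : ∃ m, j = m + 1 := ⟨j - 1, by omega⟩
  rw [Nat.add_sub_cancel] at key
  set K := (2 / (Real.exp 1 * ρ * σ)) ^ (m + 1) / d ^ (2 * (m + 1))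
  calc 1 / ((m + 1)! : ℝ) * ((2 / (Real.exp 1 * (d * ρ / (m + 1 : ℕ)) *
        (d * σ / (m + 1 : ℕ)))) ^ (m + 1) / (m + 1)!)
      = K * (((m + 1 : ℕ) : ℝ) ^ (m + 1) / (m + 1)!) ^ 2 := by
        rw [show 2 / (Real.exp 1 * (d * ρ / (m + 1 : ℕ)) * (d * σ / (m + 1 : ℕ))) =
          2 / (Real.exp 1 * ρ * σ) / d ^ 2 * ((m + 1 : ℕ) : ℝ) ^ 2 by field_simp]
        ring
    _ ≤ K * (Real.exp 1 ^ m) ^ 2 := by gcongr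
    _ = _ := by
        rw [show 2 * Real.exp 1 / (ρ * σ) = 2 / (Real.exp 1 * ρ * σ) * Real.exp 1 ^ 2 by
          field_simp, mul_pow]
        simp only [K]
        field_simp
        ring

end Constants

theorem statement5_general {n : ℕ} (G : Set (Fin n → ℝ))
    (ρ σ : ℝ) (hρ : 0 < ρ) (hσ : 0 < σ)
    (d d' : ℝ) (hd0 : 0 < d) (hdd' : d + d' < 1)
    (X g : Coeffs n)
    (hXanal : ∀ k, AnalyticOn ℂ (X k) (Gext G ((1 - d') * ρ)))
    (hganal : ∀ k, AnalyticOn ℂ (g k) (Gext G ((1 - d') * ρ)))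
    (hXfin : wnorm G X ((1 - d') * ρ) ((1 - d') * σ) ≠ ⊤)
    (hgfin : wnorm G g ((1 - d') * ρ) ((1 - d') * σ) ≠ ⊤)
    (j : ℕ) (hj : 1 ≤ j) :
    ENNReal.ofReal (1 / (Nat.factorial j : ℝ))
        * wnorm G (lieIter X j g) ((1 - d - d') * ρ) ((1 - d - d') * σ)
      ≤ ENNReal.ofReal ((1 / Real.exp 1 ^ 2) * (2 * Real.exp 1 / (ρ * σ)) ^ j * (1 / d ^ (2 * j)))
        * (wnorm G X ((1 - d') * ρ) ((1 - d') * σ)) ^ j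
        * wnorm G g ((1 - d') * ρ) ((1 - d') * σ) := by
  have hsmooth : ∀ F : Coeffs n, (∀ k, AnalyticOn ℂ (F k) (Gext G ((1 - d') * ρ))) →
      ∀ k, ContDiffOn ℂ ∞ (F k) (Gext G ((1 - d') * ρ)) :=
    fun F hF k => (hF k).contDiffOn (isOpen_Gext G _).uniqueDiffOn
  -- split the loss `d` of both the domain and the weight into `j` equal steps
  have hstep : ∀ t : ℝ, (1 - d') * t - j * (d * t / j) = (1 - d - d') * t := fun t => by
    field_simp
    ring
  obtain ⟨-, hbound⟩ := lieIter_contDiffOn_and_wnorm_le (δ₁ := d * ρ / j) (δ₂ := d * σ / j)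
    (by positivity) (by positivity) (hsmooth X hXanal) (hsmooth g hganal) hXfin hgfin j
    (by nlinarith [hstep σ])
  rw [hstep, hstep] at hbound
  calc ENNReal.ofReal (1 / (j.factorial : ℝ)) * wnorm G (lieIter X j g) ((1 - d - d') * ρ)
        ((1 - d - d') * σ)
      ≤ ENNReal.ofReal (1 / (j.factorial : ℝ)) * (ENNReal.ofReal
          ((2 / (Real.exp 1 * (d * ρ / j) * (d * σ / j))) ^ j / j.factorial)
          * wnorm G X ((1 - d') * ρ) ((1 - d') * σ) ^ j
          * wnorm G g ((1 - d') * ρ) ((1 - d') * σ)) := by gcongr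
    _ = ENNReal.ofReal (1 / (j.factorial : ℝ) *
          ((2 / (Real.exp 1 * (d * ρ / j) * (d * σ / j))) ^ j / j.factorial))
          * wnorm G X ((1 - d') * ρ) ((1 - d') * σ) ^ j
          * wnorm G g ((1 - d') * ρ) ((1 - d') * σ) := by
        rw [ENNReal.ofReal_mul (by positivity)]
        ring
    _ ≤ _ := by
        gcongr ENNReal.ofReal ?_ * _ * _
        exact inv_factorial_mul_pow_div_factorial_le hρ hσ hd0 hj

/-- Lemma 4.2: estimate for the iterated Lie derivative:
if `X` and `g` are analytic on `D_{1−d'}` with finite weighted Fourier norms, `d > 0`,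
`d' ≥ 0`, `d + d' < 1`, then for every `j ≥ 1`
`(1/j!) ‖L_X^j g‖_{1−d−d'} ≤ (1/e²) (2e/(ρσ))^j d^{−2j} ‖X‖_{1−d'}^j ‖g‖_{1−d'}`,
where `L_X g = {g, X}`. -/
theorem statement5 {n : ℕ} (hn : 1 ≤ n) (G : Set (Fin n → ℝ)) (hG : IsOpen G)
    (ρ σ : ℝ) (hρ : 0 < ρ) (hσ : 0 < σ)
    (d d' : ℝ) (hd0 : 0 < d) (hd'0 : 0 ≤ d') (hdd' : d + d' < 1)
    (X g : Coeffs n)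
    (hXanal : ∀ k, AnalyticOn ℂ (X k) (Gext G ((1 - d') * ρ)))
    (hganal : ∀ k, AnalyticOn ℂ (g k) (Gext G ((1 - d') * ρ)))
    (hXfin : wnorm G X ((1 - d') * ρ) ((1 - d') * σ) ≠ ⊤)
    (hgfin : wnorm G g ((1 - d') * ρ) ((1 - d') * σ) ≠ ⊤)
    (j : ℕ) (hj : 1 ≤ j) :
    ENNReal.ofReal (1 / (Nat.factorial j : ℝ))
        * wnorm G (lieIter X j g) ((1 - d - d') * ρ) ((1 - d - d') * σ)
      ≤ ENNReal.ofReal ((1 / Real.exp 1 ^ 2) * (2 * Real.exp 1 / (ρ * σ)) ^ j * (1 / d ^ (2 * j)))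
        * (wnorm G X ((1 - d') * ρ) ((1 - d') * σ)) ^ j
        * wnorm G g ((1 - d') * ρ) ((1 - d') * σ) :=
  statement5_general G ρ σ hρ hσ d d' hd0 hdd' X g hXanal hganal hXfin hgfin j hj

end KAMStmt
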